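/- For every n ≥ 0 and every real x ≠ 1, B̂_n(x) = (1−x)^n · Q_n( (1+x)/(1−x) ), where Q_n is the n-th derivative polynomial for secant. -/

import Mathlib

open Finset

/-- Signed permutations of order `n` (the hyperoctahedral group), modeled as a
permutation of `Fin n` together with a sign for each position. -/
abbrev BSigned (n : ℕ) := Equiv.Perm (Fin n) × (Fin n → Bool)

/-- The word of a signed permutation: `bword σ j = σ(j)` for `1 ≤ j ≤ n`,
with the convention `σ(0) = 0`. -/
def bword {n : ℕ} (σ : BSigned n) (j : ℕ) : ℤ :=
  if h : 1 ≤ j ∧ j ≤ n then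
    (if σ.2 ⟨j - 1, by omega⟩ then -1 else 1) * ((σ.1 ⟨j - 1, by omega⟩ : ℕ) + 1)
  else 0

/-- The number of alternating descents of a signed permutation: the number of
`0 ≤ j ≤ n-1` such that `j` is even and `σ(j) < σ(j+1)`, or `j` is odd and `σ(j) > σ(j+1)`. -/
def altdesB {n : ℕ} (σ : BSigned n) : ℕ :=
  ((Finset.range n).filter (fun j => (Even j ∧ bword σ j < bword σ (j + 1)) ∨
      (Odd j ∧ bword σ (j + 1) < bword σ j))).card

/-- The type B alternating Eulerian number `B̂(n,k)`. -/
def Bhat (n k : ℕ) : ℕ :=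
  (Finset.univ.filter (fun σ : BSigned n => altdesB σ = k)).card

/-- The type B alternating Eulerian polynomial `B̂_n(x)` as a real function. -/
noncomputable def Bpoly (n : ℕ) (x : ℝ) : ℝ :=
  ∑ σ : BSigned n, x ^ altdesB σ

/-- The word of a permutation of `{1,…,n}`: `aword π j = π(j)` for `1 ≤ j ≤ n`,
with the convention `π(0) = 0`. -/
def aword {n : ℕ} (π : Equiv.Perm (Fin n)) (j : ℕ) : ℕ :=
  if h : 1 ≤ j ∧ j ≤ n then (π ⟨j - 1, by omega⟩ : ℕ) + 1 else 0

/-- The number of alternating descents of a permutation: the number of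
`1 ≤ j ≤ n-1` such that `j` is odd and `π(j) > π(j+1)`, or `j` is even and `π(j) < π(j+1)`. -/
def altdesA {n : ℕ} (π : Equiv.Perm (Fin n)) : ℕ :=
  ((Finset.Icc 1 (n - 1)).filter (fun j => (Odd j ∧ aword π (j + 1) < aword π j) ∨
      (Even j ∧ aword π j < aword π (j + 1)))).card

/-- The type A alternating Eulerian number `Â(n,k)`. -/
def Ahat (n k : ℕ) : ℕ :=
  (Finset.univ.filter (fun π : Equiv.Perm (Fin n) => altdesA π = k)).card

/-- The type A alternating Eulerian polynomial `Â_n(x)` as a real function. -/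
noncomputable def Apoly (n : ℕ) (x : ℝ) : ℝ :=
  ∑ π : Equiv.Perm (Fin n), x ^ altdesA π

/-- The number of left peaks of a permutation: indices `1 ≤ i ≤ n-1` with
`π(i-1) < π(i) > π(i+1)`, where `π(0) = 0`. -/
def lpk {n : ℕ} (π : Equiv.Perm (Fin n)) : ℕ :=
  ((Finset.Icc 1 (n - 1)).filter (fun i =>
      aword π (i - 1) < aword π i ∧ aword π (i + 1) < aword π i)).card

/-- `M n k` is the number of permutations of `{1,…,n}` with exactly `k` left peaks. -/
def M (n k : ℕ) : ℕ :=
  (Finset.univ.filter (fun π : Equiv.Perm (Fin n) => lpk π = k)).card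

/-- The derivative polynomials for secant: `Q 0 = 1`,
`Q (n+1) = x Q n + (1+x²) (Q n)'`. -/
noncomputable def Q : ℕ → Polynomial ℝ
  | 0 => 1
  | n + 1 => Polynomial.X * Q n + (1 + Polynomial.X ^ 2) * Polynomial.derivative (Q n)

/-- The coefficients `ξ_{n,i}` (terms with negative index vanish). -/
def xi : ℕ → ℤ → ℤ
  | 0, i => if i = 0 then 1 else 0
  | n + 1, i => (1 + 2 * (n : ℤ) - 6 * i) * xi n i + ((n : ℤ) - 2 * i + 2) * xi n (i - 1)
      - 4 * (i + 1) * xi n (i + 1)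

/-- The polynomial `ξ_n(x) = Σ_{i=0}^{⌊n/2⌋} ξ_{n,i} x^i` as a real function. -/
noncomputable def xiPoly (n : ℕ) (x : ℝ) : ℝ :=
  ∑ i ∈ Finset.range (n / 2 + 1), (xi n i : ℝ) * x ^ i

/-- A snake: a signed permutation with `σ(0) < σ(1) > σ(2) < σ(3) > ⋯`. -/
def IsSnake {n : ℕ} (σ : BSigned n) : Prop :=
  ∀ i : ℕ, (2 * i + 1 ≤ n → bword σ (2 * i) < bword σ (2 * i + 1)) ∧
    (2 * i + 2 ≤ n → bword σ (2 * i + 2) < bword σ (2 * i + 1))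

/-- The Springer number `s_n`: the number of snakes of order `n`. -/
noncomputable def springer (n : ℕ) : ℕ := Nat.card {σ : BSigned n // IsSnake σ}

/-- An alternating (down-up) permutation: `π(1) > π(2) < π(3) > ⋯`. -/
def IsAlternating {m : ℕ} (π : Equiv.Perm (Fin m)) : Prop :=
  ∀ j : ℕ, 1 ≤ j → j + 1 ≤ m →
    (Odd j → aword π (j + 1) < aword π j) ∧ (Even j → aword π j < aword π (j + 1))

/-- The secant number `E_{2n}`: the number of alternating permutations of `{1,…,2n}`. -/
noncomputable def secantNumber (n : ℕ) : ℕ :=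
  Nat.card {π : Equiv.Perm (Fin (2 * n)) // IsAlternating π}

/-!
Every signed permutation of order `n + 1` arises exactly once by inserting the letter `±(n+1)`
into a signed permutation `σ` of order `n`. Inserted at the end it adds an alternating descent
for exactly one of the two signs. Inserted after position `p < n` it creates two alternating
descents for one sign and none for the other, while shifting the tail of the word; after first
negating that tail, the shifted comparisons are the old ones, except that the comparison at `p`
is lost. Summing over `σ`, `p` and the sign gives
`B̂_{n+1} = (1 + x) B̂_n + (1 + x²) ((1 - x) B̂_n' + n B̂_n)`.
The right-hand side `(1 - x)ⁿ Qₙ((1 + x)/(1 - x))` satisfies the same recurrence on `x ≠ 1`,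
which is an open set, so derivatives agree there and induction on `n` concludes.
-/

def IsAltDescentAt (w : ℕ → ℤ) (j : ℕ) : Prop :=
  (Even j ∧ w j < w (j + 1)) ∨ (Odd j ∧ w (j + 1) < w j)

instance (w : ℕ → ℤ) : DecidablePred (IsAltDescentAt w) := fun j => by
  unfold IsAltDescentAt; infer_instance

/-- Shifting a word by one place flips the parity of every index, and negating it reverses
every comparison, so the two effects cancel. -/
lemma isAltDescentAt_succ_iff_of_neg {u v : ℕ → ℤ} {j : ℕ} (h₀ : u (j + 1) = -v j)
    (h₁ : u (j + 2) = -v (j + 1)) : IsAltDescentAt u (j + 1) ↔ IsAltDescentAt v j := by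
  unfold IsAltDescentAt
  rw [h₀, h₁, Nat.even_add_one, Nat.odd_add_one, Nat.not_even_iff_odd, Nat.not_odd_iff_even,
    neg_lt_neg_iff, neg_lt_neg_iff]
  tauto

lemma card_filter_range_succ_add_ite {f g : ℕ → Prop} [DecidablePred f] [DecidablePred g]
    {n p : ℕ} (hp : p < n) (hlow : ∀ j < p, f j ↔ g j)
    (hhigh : ∀ j, p < j → j < n → (f (j + 1) ↔ g j)) :
    #{j ∈ range (n + 1) | f j} + (if g p then 1 else 0)
      = #{j ∈ range n | g j} + (if f p then 1 else 0) + (if f (p + 1) then 1 else 0) := by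
  have split_f : #{j ∈ range (n + 1) | f j} = #{j ∈ range p | f j} + (if f p then 1 else 0)
      + (if f (p + 1) then 1 else 0) + #{j ∈ Ico (p + 1) n | f (j + 1)} := by
    simp only [card_filter]
    rw [← sum_range_add_sum_Ico _ (by omega : p ≤ n + 1),
      sum_eq_sum_Ico_succ_bot (by omega : p < n + 1),
      sum_eq_sum_Ico_succ_bot (by omega : p + 1 < n + 1),
      sum_Ico_add' (fun j => if f j then 1 else 0)]
    ring
  have split_g : #{j ∈ range n | g j} = #{j ∈ range p | g j} + (if g p then 1 else 0)
      + #{j ∈ Ico (p + 1) n | g j} := by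
    simp only [card_filter]
    rw [← sum_range_add_sum_Ico _ hp.le, sum_eq_sum_Ico_succ_bot hp, add_assoc]
  have low : #{j ∈ range p | f j} = #{j ∈ range p | g j} :=
    congrArg card (filter_congr fun j hj => hlow j (mem_range.1 hj))
  have high : #{j ∈ Ico (p + 1) n | f (j + 1)} = #{j ∈ Ico (p + 1) n | g j} :=
    congrArg card (filter_congr fun j hj => by
      obtain ⟨h₁, h₂⟩ := mem_Ico.1 hj; exact hhigh j (by omega) h₂)
  omega

lemma altdesB_eq_card {n : ℕ} (σ : BSigned n) :
    altdesB σ = #{j ∈ range n | IsAltDescentAt (bword σ) j} := rfl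

lemma altdesB_le {n : ℕ} (σ : BSigned n) : altdesB σ ≤ n :=
  (card_filter_le _ _).trans (card_range n).le

lemma bword_zero {n : ℕ} (σ : BSigned n) : bword σ 0 = 0 := rfl

lemma bword_of_lt {n : ℕ} (σ : BSigned n) {j : ℕ} (hj : n < j) : bword σ j = 0 := by
  simp [bword]; omega

lemma bword_succ {n : ℕ} (σ : BSigned n) {i : ℕ} (hi : i < n) :
    bword σ (i + 1) = (if σ.2 ⟨i, hi⟩ then -1 else 1) * ((σ.1 ⟨i, hi⟩ : ℕ) + 1) := by
  simp [bword, hi]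

lemma abs_bword_le {n : ℕ} (σ : BSigned n) (j : ℕ) : |bword σ j| ≤ n := by
  rcases j with _ | i
  · simp [bword_zero]
  by_cases hi : i < n
  · have := (σ.1 ⟨i, hi⟩).isLt
    rw [bword_succ σ hi, abs_le]
    split_ifs <;> constructor <;> omega
  · simp [bword_of_lt σ (by omega : n < i + 1)]

/-- Negates the letters `σ(j)` for `j > p`. -/
def negTail {n : ℕ} (σ : BSigned n) (p : ℕ) : BSigned n :=
  (σ.1, fun i => if p ≤ (i : ℕ) then !σ.2 i else σ.2 i)

lemma negTail_involutive {n : ℕ} (p : ℕ) : Function.Involutive (negTail (n := n) · p) := by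
  intro σ
  refine Prod.ext rfl (funext fun i => ?_)
  by_cases h : p ≤ (i : ℕ) <;> simp [negTail, h]

lemma bword_negTail {n : ℕ} (σ : BSigned n) (p j : ℕ) :
    bword (negTail σ p) j = if j ≤ p then bword σ j else -bword σ j := by
  rcases j with _ | i
  · simp [bword_zero]
  by_cases hi : i < n
  · rw [bword_succ _ hi, bword_succ _ hi]
    by_cases h : i + 1 ≤ p
    · simp [negTail, h, show ¬p ≤ i by omega]
    · cases hs : σ.2 ⟨i, hi⟩ <;> simp [negTail, h, hs, show p ≤ i by omega]
  · simp [bword_of_lt _ (by omega : n < i + 1)]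

/-- Inserts the letter `±(n+1)` (negative iff `s`) at position `p + 1` of the word of `σ`. -/
def insertMax {n : ℕ} (σ : BSigned n) (p : Fin (n + 1)) (s : Bool) : BSigned (n + 1) :=
  ((finSuccEquiv' p).trans (σ.1.optionCongr.trans (finSuccEquiv' (Fin.last n)).symm),
    p.insertNth s σ.2)

section insertMax

variable {n : ℕ} (σ : BSigned n) (p : Fin (n + 1)) (s : Bool)

lemma insertMax_fst_apply_self : (insertMax σ p s).1 p = Fin.last n := by
  simp [insertMax]

lemma insertMax_fst_apply_succAbove (i : Fin n) :
    (insertMax σ p s).1 (p.succAbove i) = (σ.1 i).castSucc := by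
  simp [insertMax, Fin.succAbove_last]

lemma insertMax_snd_apply_self : (insertMax σ p s).2 p = s := by
  simp [insertMax]

lemma insertMax_snd_apply_succAbove (i : Fin n) :
    (insertMax σ p s).2 (p.succAbove i) = σ.2 i := by
  simp [insertMax]

lemma bword_insertMax_of_le {j : ℕ} (hj : j ≤ p) : bword (insertMax σ p s) j = bword σ j := by
  rcases j with _ | i
  · rfl
  have hi : i < n := by omega
  have hpos : (⟨i, by omega⟩ : Fin (n + 1)) = p.succAbove ⟨i, hi⟩ := by
    rw [Fin.succAbove_of_castSucc_lt p _ (by simp [Fin.lt_def]; omega)]; rfl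
  rw [bword_succ _ (by omega : i < n + 1), bword_succ _ hi, hpos, insertMax_fst_apply_succAbove,
    insertMax_snd_apply_succAbove, Fin.val_castSucc]

lemma bword_insertMax_succ_self :
    bword (insertMax σ p s) (p + 1) = (if s then -1 else 1) * ((n : ℤ) + 1) := by
  simp [bword_succ _ p.isLt, insertMax_fst_apply_self, insertMax_snd_apply_self]

lemma bword_insertMax_succ_of_lt {j : ℕ} (hj : p < j) :
    bword (insertMax σ p s) (j + 1) = bword σ j := by
  by_cases hjn : j ≤ n
  · obtain ⟨i, rfl⟩ : ∃ i, j = i + 1 := ⟨j - 1, by omega⟩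
    have hi : i < n := by omega
    have hpos : (⟨i + 1, by omega⟩ : Fin (n + 1)) = p.succAbove ⟨i, hi⟩ := by
      rw [Fin.succAbove_of_le_castSucc p _ (by simp [Fin.le_def]; omega)]; rfl
    rw [bword_succ _ (by omega : i + 1 < n + 1), bword_succ _ hi, hpos,
      insertMax_fst_apply_succAbove, insertMax_snd_apply_succAbove, Fin.val_castSucc]
  · rw [bword_of_lt _ (by omega), bword_of_lt _ (by omega)]

end insertMax

lemma insertMax_bijective (n : ℕ) :
    Function.Bijective fun z : BSigned n × Fin (n + 1) × Bool => insertMax z.1 z.2.1 z.2.2 := by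
  rw [Fintype.bijective_iff_injective_and_card]
  refine ⟨?_, by simp [Fintype.card_perm, Nat.factorial_succ, pow_succ]; ring⟩
  rintro ⟨σ, p, s⟩ ⟨σ', p', s'⟩ h
  simp only at h
  obtain rfl : p = p' := (insertMax σ' p' s').1.injective <| by
    rw [← h, insertMax_fst_apply_self, ← insertMax_fst_apply_self σ' p' s', h]
  have hperm : σ.1 = σ'.1 := Equiv.ext fun i => Fin.castSucc_injective n <| by
    rw [← insertMax_fst_apply_succAbove σ p s, ← insertMax_fst_apply_succAbove σ' p s', h]
  have hsign : σ.2 = σ'.2 := funext fun i => by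
    rw [← insertMax_snd_apply_succAbove σ p s, ← insertMax_snd_apply_succAbove σ' p s', h]
  have hs : s = s' := by
    rw [← insertMax_snd_apply_self σ p s, ← insertMax_snd_apply_self σ' p s', h]
  rw [Prod.ext hperm hsign, hs]

section insertMaxDescents

variable {n : ℕ} (σ : BSigned n) (p : Fin (n + 1)) (s : Bool)

lemma isAltDescentAt_insertMax_iff_of_lt {j : ℕ} (hj : j < p) :
    IsAltDescentAt (bword (insertMax σ p s)) j ↔ IsAltDescentAt (bword σ) j := by
  unfold IsAltDescentAt
  rw [bword_insertMax_of_le σ p s hj.le, bword_insertMax_of_le σ p s hj]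

/-- Since `|σ(j)| ≤ n`, only the sign of `±(n+1)` and the parity of `p` matter. -/
lemma isAltDescentAt_insertMax_self :
    IsAltDescentAt (bword (insertMax σ p s)) p ↔ (Even (p : ℕ) ↔ s = false) := by
  unfold IsAltDescentAt
  rw [bword_insertMax_of_le σ p s le_rfl, bword_insertMax_succ_self]
  have := abs_le.mp (abs_bword_le σ p)
  cases s <;> simp only [Nat.even_iff, Nat.odd_iff] <;> simp <;> omega

lemma isAltDescentAt_insertMax_succ_self :
    IsAltDescentAt (bword (insertMax σ p s)) (p + 1) ↔ (Even (p : ℕ) ↔ s = false) := by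
  unfold IsAltDescentAt
  rw [bword_insertMax_succ_self, bword_insertMax_succ_of_lt σ p s (Nat.lt_succ_self p)]
  have := abs_le.mp (abs_bword_le σ (p + 1))
  cases s <;> simp only [Nat.even_iff, Nat.odd_iff] <;> simp <;> omega

end insertMaxDescents

lemma altdesB_insertMax_last {n : ℕ} (σ : BSigned n) (s : Bool) :
    altdesB (insertMax σ (Fin.last n) s)
      = altdesB σ + if (Even n ↔ s = false) then 1 else 0 := by
  have hlast := isAltDescentAt_insertMax_self σ (Fin.last n) s
  rw [Fin.val_last] at hlast
  rw [altdesB_eq_card, altdesB_eq_card, card_filter, card_filter, sum_range_succ,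
    if_congr hlast rfl rfl]
  congr 1
  refine sum_congr rfl fun j hj => ?_
  rw [if_congr (isAltDescentAt_insertMax_iff_of_lt σ _ s (by simpa using hj)) rfl rfl]

lemma altdesB_insertMax_negTail {n : ℕ} (σ : BSigned n) (p : Fin (n + 1)) (hp : (p : ℕ) < n)
    (s : Bool) :
    altdesB (insertMax (negTail σ p) p s) + (if IsAltDescentAt (bword σ) p then 1 else 0)
      = altdesB σ + if (Even (p : ℕ) ↔ s = false) then 2 else 0 := by
  have hlow : ∀ j < (p : ℕ),
      IsAltDescentAt (bword (insertMax (negTail σ p) p s)) j ↔ IsAltDescentAt (bword σ) j := by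
    intro j hj
    rw [isAltDescentAt_insertMax_iff_of_lt _ p s hj]
    unfold IsAltDescentAt
    rw [bword_negTail, bword_negTail, if_pos hj.le, if_pos (show j + 1 ≤ p by omega)]
  have hhigh : ∀ j, (p : ℕ) < j → j < n →
      (IsAltDescentAt (bword (insertMax (negTail σ p) p s)) (j + 1) ↔
        IsAltDescentAt (bword σ) j) := by
    intro j hj _
    refine isAltDescentAt_succ_iff_of_neg ?_ ?_
    · rw [bword_insertMax_succ_of_lt _ p s hj, bword_negTail, if_neg (by omega)]
    · rw [bword_insertMax_succ_of_lt _ p s (by omega), bword_negTail, if_neg (by omega)]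
  rw [altdesB_eq_card, altdesB_eq_card, card_filter_range_succ_add_ite hp hlow hhigh,
    if_congr (isAltDescentAt_insertMax_self _ p s) rfl rfl,
    if_congr (isAltDescentAt_insertMax_succ_self _ p s) rfl rfl]
  split_ifs <;> omega

lemma one_le_altdesB {n : ℕ} {σ : BSigned n} {p : ℕ} (hp : p < n)
    (h : IsAltDescentAt (bword σ) p) : 1 ≤ altdesB σ :=
  card_pos.mpr ⟨p, mem_filter.mpr ⟨mem_range.mpr hp, h⟩⟩

lemma sum_pow_altdesB_insertMax_last {n : ℕ} (σ : BSigned n) (x : ℝ) :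
    ∑ s : Bool, x ^ altdesB (insertMax σ (Fin.last n) s) = (1 + x) * x ^ altdesB σ := by
  rw [Fintype.sum_bool, altdesB_insertMax_last, altdesB_insertMax_last]
  by_cases hn : Even n <;> simp [hn, pow_succ] <;> ring

lemma sum_pow_altdesB_insertMax_negTail {n : ℕ} (σ : BSigned n) (p : Fin (n + 1))
    (hp : (p : ℕ) < n) (x : ℝ) :
    ∑ s : Bool, x ^ altdesB (insertMax (negTail σ p) p s)
      = (1 + x ^ 2) *
          if IsAltDescentAt (bword σ) p then x ^ (altdesB σ - 1) else x ^ altdesB σ := by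
  have key (s : Bool) : altdesB (insertMax (negTail σ p) p s)
      = (if IsAltDescentAt (bword σ) p then altdesB σ - 1 else altdesB σ)
        + if (Even (p : ℕ) ↔ s = false) then 2 else 0 := by
    have h := altdesB_insertMax_negTail σ p hp s
    by_cases hd : IsAltDescentAt (bword σ) p
    · have := one_le_altdesB hp hd
      simp only [hd, if_true] at h ⊢
      omega
    · simp only [hd, if_false, add_zero] at h ⊢
      omega
  rw [Fintype.sum_bool, key, key]
  by_cases hpe : Even (p : ℕ) <;> split_ifs <;> simp_all [pow_add] <;> ring

lemma sum_ite_pow_altdesB {n : ℕ} (σ : BSigned n) (x : ℝ) :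
    ∑ p : Fin n, (if IsAltDescentAt (bword σ) p then x ^ (altdesB σ - 1) else x ^ altdesB σ)
      = (1 - x) * (altdesB σ * x ^ (altdesB σ - 1)) + n * x ^ altdesB σ := by
  have hcompl : #{p ∈ range n | ¬IsAltDescentAt (bword σ) p} = n - altdesB σ := by
    rw [filter_not, card_sdiff_of_subset (filter_subset _ _), card_range, altdesB_eq_card]
  rw [Fin.sum_univ_eq_sum_range
      (fun p => if IsAltDescentAt (bword σ) p then x ^ (altdesB σ - 1) else x ^ altdesB σ),
    sum_ite, sum_const, sum_const, ← altdesB_eq_card, hcompl, nsmul_eq_mul, nsmul_eq_mul,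
    Nat.cast_sub (altdesB_le σ)]
  rcases Nat.eq_zero_or_pos (altdesB σ) with h | h
  · simp [h]
  · have := mul_pow_sub_one h.ne' x
    linear_combination (altdesB σ : ℝ) * this

lemma hasDerivAt_Bpoly (n : ℕ) (x : ℝ) :
    HasDerivAt (Bpoly n) (∑ σ : BSigned n, (altdesB σ : ℝ) * x ^ (altdesB σ - 1)) x :=
  HasDerivAt.fun_sum fun σ _ => hasDerivAt_pow (altdesB σ) x

lemma Bpoly_succ (n : ℕ) (x : ℝ) :
    Bpoly (n + 1) x = (1 + x) * Bpoly n x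
      + (1 + x ^ 2) * ((1 - x) * deriv (Bpoly n) x + n * Bpoly n x) := by
  have hsplit : Bpoly (n + 1) x
      = ∑ σ : BSigned n, ∑ s, x ^ altdesB (insertMax σ (Fin.last n) s)
        + ∑ p : Fin n, ∑ σ : BSigned n, ∑ s, x ^ altdesB (insertMax σ p.castSucc s) := by
    rw [Bpoly, ← Fintype.sum_bijective _ (insertMax_bijective n) _ _ fun _ => rfl,
      Fintype.sum_prod_type, sum_comm (γ := Fin n), ← sum_add_distrib]
    refine sum_congr rfl fun σ _ => ?_
    rw [Fintype.sum_prod_type, Fin.sum_univ_castSucc, add_comm]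
  have hinner (p : Fin n) : ∑ σ : BSigned n, ∑ s, x ^ altdesB (insertMax σ p.castSucc s)
      = (1 + x ^ 2) * ∑ σ : BSigned n,
          if IsAltDescentAt (bword σ) p then x ^ (altdesB σ - 1) else x ^ altdesB σ := by
    rw [← Equiv.sum_comp (Function.Involutive.toPerm _ (negTail_involutive p)), mul_sum]
    exact sum_congr rfl fun σ _ => sum_pow_altdesB_insertMax_negTail σ p.castSucc p.isLt x
  rw [hsplit, sum_congr rfl fun p _ => hinner p]
  simp only [sum_pow_altdesB_insertMax_last]
  rw [← mul_sum, ← mul_sum, sum_comm, (hasDerivAt_Bpoly n x).deriv]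
  simp only [sum_ite_pow_altdesB]
  rw [Bpoly, sum_add_distrib, mul_sum, mul_sum, mul_sum]

noncomputable def secantHom (n : ℕ) (x : ℝ) : ℝ :=
  (1 - x) ^ n * (Q n).eval ((1 + x) / (1 - x))

lemma hasDerivAt_secantHom (n : ℕ) {x : ℝ} (hx : x ≠ 1) :
    HasDerivAt (secantHom n)
      (-(n * (1 - x) ^ (n - 1)) * (Q n).eval ((1 + x) / (1 - x))
        + (1 - x) ^ n * ((Q n).derivative.eval ((1 + x) / (1 - x)) * (2 / (1 - x) ^ 2))) x := by
  have hden : HasDerivAt (fun y : ℝ => 1 - y) (-1) x := (hasDerivAt_id' x).const_sub 1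
  have hfrac : HasDerivAt (fun y : ℝ => (1 + y) / (1 - y)) (2 / (1 - x) ^ 2) x :=
    (((hasDerivAt_id' x).const_add 1).fun_div hden (sub_ne_zero.mpr hx.symm)).congr_deriv
      (by ring)
  refine ((hden.fun_pow n).fun_mul (((Q n).hasDerivAt _).comp x hfrac)).congr_deriv ?_
  simp only [Function.comp_apply]
  ring

/-- The recurrence of `Q` transported by `t = (1 + x)/(1 - x)`, using
`(1 - x)² (1 + t²) = 2 (1 + x²)`. -/
lemma secantHom_succ (n : ℕ) {x : ℝ} (hx : x ≠ 1) :
    secantHom (n + 1) x = (1 + x) * secantHom n x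
      + (1 + x ^ 2) * ((1 - x) * deriv (secantHom n) x + n * secantHom n x) := by
  have hpow : (n : ℝ) * ((1 - x) * (1 - x) ^ (n - 1)) = n * (1 - x) ^ n := by
    rcases n with _ | m
    · simp
    · rw [mul_pow_sub_one m.succ_ne_zero]
  rw [(hasDerivAt_secantHom n hx).deriv]
  simp only [secantHom, Q, Polynomial.eval_add, Polynomial.eval_mul, Polynomial.eval_X,
    Polynomial.eval_pow, Polynomial.eval_one]
  field_simp
  linear_combination (1 - x) ^ 2 * (1 + x ^ 2) * (Q n).eval ((1 + x) / (1 - x)) * hpow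

/-- `B̂_n(x) = (1-x)^n · Q_n((1+x)/(1-x))` for `x ≠ 1`, where `Q_n`
is the `n`-th derivative polynomial for secant. -/
theorem stmt9 (n : ℕ) (x : ℝ) (hx : x ≠ 1) :
    Bpoly n x = (1 - x) ^ n * (Q n).eval ((1 + x) / (1 - x)) := by
  change Bpoly n x = secantHom n x
  induction n generalizing x with
  | zero => simp [Bpoly, altdesB, secantHom, Q]
  | succ n ih =>
    have hnear : Bpoly n =ᶠ[nhds x] secantHom n :=
      (eventually_ne_nhds hx).mono fun y hy => ih y hy
    rw [Bpoly_succ, hnear.deriv_eq, ih x hx, secantHom_succ n hx]
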